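/- Let T be a tree rooted at r with heavy child u, and suppose c is the unique colour in L(r) such that T − T_u admits an L-colouring assigning c to r. Then T admits an L-colouring if and only if T_u admits an L-colouring in which the root u does not receive colour c. -/

import Mathlib

/-!
Permuting children changes neither colourings nor labels, so `u` may be taken as the first
child. A colouring of `T` restricts to one of `T − T_u`, which forces colour `c₀` on `r`, so the
root of `u` avoids `c₀`. Conversely, `T_u` and `T − T_u` share no vertex, so a colouring of
`T_u` avoiding `c₀` at its root glues with a colouring of `T − T_u`.
-/

/-- Rooted trees with vertices labelled by elements of `V`; the children are
given as an ordered list. -/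
inductive LTree (V : Type) : Type where
  | node : V → List (LTree V) → LTree V

/-- The root (label) of a labelled rooted tree. -/
def LTree.root {V : Type} : LTree V → V
  | .node v _ => v

mutual
  /-- `LTree.Colors L c t` : the assignment `c` is a proper `L`-colouring of the
  tree `t`, i.e. every vertex gets a colour from its list and adjacent vertices
  (parent/child pairs) get distinct colours. -/
  def LTree.Colors {V : Type} (L : V → Finset ℕ) (c : V → ℕ) : LTree V → Prop
    | .node v cs => c v ∈ L v ∧ (∀ t ∈ cs, c t.root ≠ c v) ∧ LTree.ColorsList L c cs
  def LTree.ColorsList {V : Type} (L : V → Finset ℕ) (c : V → ℕ) : List (LTree V) → Prop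
    | [] => True
    | t :: ts => LTree.Colors L c t ∧ LTree.ColorsList L c ts
end

mutual
  /-- The list of labels of the vertices of a labelled rooted tree. -/
  def LTree.labels {V : Type} : LTree V → List V
    | .node v cs => v :: LTree.labelsList cs
  def LTree.labelsList {V : Type} : List (LTree V) → List V
    | [] => []
    | t :: ts => LTree.labels t ++ LTree.labelsList ts
end

mutual
  /-- Number of vertices of a labelled rooted tree. -/
  def LTree.size {V : Type} : LTree V → ℕ
    | .node _ cs => 1 + LTree.sizeList cs
  def LTree.sizeList {V : Type} : List (LTree V) → ℕ
    | [] => 0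
    | t :: ts => LTree.size t + LTree.sizeList ts
end

/-- The `i`th child in the list `cs` of children subtrees is *heavy* if its
subtree is at least as large as every other child's subtree, with strict
inequality for children preceding it in the order. -/
def LHeavyIdx {V : Type} (cs : List (LTree V)) (i : Fin cs.length) : Prop :=
  ∀ j : Fin cs.length,
    (cs.get j).size ≤ (cs.get i).size ∧ (j < i → (cs.get j).size < (cs.get i).size)

namespace LTree

variable {V : Type} {L : V → Finset ℕ} {c c' : V → ℕ}

theorem labelsList_eq_flatMap : ∀ l : List (LTree V), labelsList l = l.flatMap labels
  | [] => rfl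
  | t :: ts => by simp [labelsList, labelsList_eq_flatMap ts]

theorem mem_labels_node {v w : V} {cs : List (LTree V)} :
    w ∈ (node v cs).labels ↔ w = v ∨ ∃ t ∈ cs, w ∈ t.labels := by
  simp [labels, labelsList_eq_flatMap]

theorem root_mem_labels : ∀ t : LTree V, t.root ∈ t.labels
  | node _ _ => List.mem_cons_self

theorem labels_node_perm {v : V} {cs cs' : List (LTree V)} (h : cs.Perm cs') :
    (node v cs).labels.Perm (node v cs').labels := by
  simpa only [labels, labelsList_eq_flatMap] using (h.flatMap_right labels).cons v

theorem disjoint_labels_of_nodup {v : V} {t : LTree V} {cs : List (LTree V)}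
    (h : (node v (t :: cs)).labels.Nodup) : t.labels.Disjoint (node v cs).labels := by
  simp only [labels, labelsList, List.nodup_cons, List.mem_append, not_or,
    List.nodup_append] at h
  exact List.disjoint_cons_right.2 ⟨h.1.1, fun w hw hw' => h.2.2.2 w hw w hw' rfl⟩

theorem colorsList_iff_forall : ∀ l : List (LTree V), ColorsList L c l ↔ ∀ t ∈ l, Colors L c t
  | [] => by simp [ColorsList]
  | t :: ts => by simp [ColorsList, colorsList_iff_forall ts]

theorem colors_node_iff {v : V} {cs : List (LTree V)} :
    Colors L c (node v cs) ↔ c v ∈ L v ∧ ∀ t ∈ cs, Colors L c t ∧ c t.root ≠ c v := by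
  simp only [Colors, colorsList_iff_forall, ← forall_and]
  grind

theorem colors_node_cons_iff {v : V} {t : LTree V} {cs : List (LTree V)} :
    Colors L c (node v (t :: cs)) ↔
      Colors L c t ∧ c t.root ≠ c v ∧ Colors L c (node v cs) := by
  simp only [colors_node_iff, List.forall_mem_cons]
  tauto

theorem colors_node_perm {v : V} {cs cs' : List (LTree V)} (h : cs.Perm cs') :
    Colors L c (node v cs) ↔ Colors L c (node v cs') := by
  simp only [colors_node_iff, h.mem_iff]

theorem colors_congr :
    ∀ t : LTree V, (∀ v ∈ t.labels, c v = c' v) → Colors L c t → Colors L c' t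
  | node v cs, h, hc => by
    have hv := h v (mem_labels_node.2 (Or.inl rfl))
    have hsub : ∀ t ∈ cs, ∀ w ∈ t.labels, c w = c' w :=
      fun t ht w hw => h w (mem_labels_node.2 (Or.inr ⟨t, ht, hw⟩))
    rw [colors_node_iff] at hc ⊢
    refine ⟨hv ▸ hc.1, fun t ht => ⟨colors_congr t (hsub t ht) (hc.2 t ht).1, ?_⟩⟩
    rw [← hv, ← hsub t ht t.root (root_mem_labels t)]
    exact (hc.2 t ht).2

open Classical in
theorem colors_node_cons_of_disjoint {v : V} {t : LTree V} {cs : List (LTree V)}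
    (hdisj : t.labels.Disjoint (node v cs).labels) (hc : Colors L c (node v cs))
    (ht : Colors L c' t) (hne : c' t.root ≠ c v) :
    Colors L (fun w => if w ∈ t.labels then c' w else c w) (node v (t :: cs)) := by
  have on_t : ∀ w ∈ t.labels, c' w = if w ∈ t.labels then c' w else c w :=
    fun w hw => (if_pos hw).symm
  have on_rest : ∀ w ∈ (node v cs).labels, c w = if w ∈ t.labels then c' w else c w :=
    fun w hw => (if_neg fun hw' => hdisj hw' hw).symm
  refine colors_node_cons_iff.2 ⟨colors_congr t on_t ht, ?_, colors_congr _ on_rest hc⟩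
  rwa [← on_t _ (root_mem_labels t), ← on_rest v (root_mem_labels (node v cs))]

end LTree

/-- Let `T` be the tree rooted at `r` with children subtrees `cs1 ++ u :: cs2`,
where `u` is the heavy child, and suppose `c₀` is the unique colour in `L r`
achievable as the colour of `r` in an `L`-colouring of `T − T_u`.  Then `T`
admits an `L`-colouring iff `T_u` admits an `L`-colouring in which the root of
`u` does not receive colour `c₀`. -/
theorem critical_reduction (V : Type) (r : V) (cs1 cs2 : List (LTree V))
    (u : LTree V) (L : V → Finset ℕ)
    (hnodup : (LTree.node r (cs1 ++ u :: cs2)).labels.Nodup)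
    (hheavy : LHeavyIdx (cs1 ++ u :: cs2) ⟨cs1.length, by simp⟩)
    (c₀ : ℕ) (hc₀ : c₀ ∈ L r)
    (hach : ∃ c, LTree.Colors L c (LTree.node r (cs1 ++ cs2)) ∧ c r = c₀)
    (huniq : ∀ c, LTree.Colors L c (LTree.node r (cs1 ++ cs2)) → c r = c₀) :
    (∃ c, LTree.Colors L c (LTree.node r (cs1 ++ u :: cs2))) ↔
      (∃ c, LTree.Colors L c u ∧ c u.root ≠ c₀) := by
  have hperm : (cs1 ++ u :: cs2).Perm (u :: (cs1 ++ cs2)) := List.perm_middle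
  have hdisj := LTree.disjoint_labels_of_nodup ((LTree.labels_node_perm hperm).nodup_iff.1 hnodup)
  simp only [LTree.colors_node_perm hperm]
  constructor
  · rintro ⟨c, hc⟩
    obtain ⟨hu, hne, hrest⟩ := LTree.colors_node_cons_iff.1 hc
    exact ⟨c, hu, huniq c hrest ▸ hne⟩
  · rintro ⟨c', hu, hne⟩
    obtain ⟨c, hc, rfl⟩ := hach
    exact ⟨_, LTree.colors_node_cons_of_disjoint hdisj hc hu hne⟩
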